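/- There exists a constant c_l > 0 such that for all n ≥ 1 and all x ∈ [−√n, √n], the density f(x, n) of the sum of n i.i.d. Uniform[−1,1] random variables satisfies f(x, n) ≥ c_l / √n. -/

import Mathlib

/-- The density of the Uniform[-1,1] distribution. -/
noncomputable def unifDensity (x : ℝ) : ℝ :=
  if x ∈ Set.Icc (-1 : ℝ) 1 then 1 / 2 else 0

/-- `sumUnifDensity n` is the density of the sum of `n` i.i.d. Uniform[-1,1]
random variables, defined (for `n ≥ 1`) as the `n`-fold convolution of the
Uniform[-1,1] density with itself. -/
noncomputable def sumUnifDensity : ℕ → ℝ → ℝ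
  | 0, _ => 0
  | 1, x => unifDensity x
  | (n + 2), x => ∫ τ : ℝ, sumUnifDensity (n + 1) (x - τ) * unifDensity τ

/-!
For `n ≥ 1`, `sumUnifDensity (n + 1)` is the average of `sumUnifDensity n` over windows of
width 2. Such averaging preserves being even and decreasing in `|x|`, so it suffices to bound the
density from below at `x = √n`.

For small `n`, the bound `4⁻ⁿ` at `x = (n + 1) / 2 ≥ √n` propagates along the averaging. For
`n ≥ 64`, the averaging also yields the even moments up to order 8 in closed form. Against them,
`G(s) = (s² - n/2)² s² (1 - s²/(64n))` has mean at least `9n³/32`, while `G ≤ n³/4` on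
`s² ≤ n`, `G ≤ 2¹⁸n³` on `s² ≤ 64n` and `G ≤ 0` beyond. So the density has mass at least
`2⁻²³` on `{n < s² ≤ 64n}`, a set of length at most `16√n` on which it is at most its value
at `√n`.
-/

open MeasureTheory Set

theorem integrable_of_abs_le_of_notMem_eq_zero {α : Type*} [MeasurableSpace α] {μ : Measure α}
    {f : α → ℝ} {s : Set α} {C : ℝ} (hs : MeasurableSet s) (hμs : μ s ≠ ⊤)
    (hf : AEStronglyMeasurable f μ) (hC : ∀ x ∈ s, |f x| ≤ C) (h0 : ∀ x ∉ s, f x = 0) :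
    Integrable f μ :=
  (Measure.integrableOn_of_bounded hμs hf (ae_restrict_of_forall_mem hs hC))
    |>.integrable_of_forall_notMem_eq_zero h0

theorem unifDensity_nonneg (x : ℝ) : 0 ≤ unifDensity x := by
  unfold unifDensity; split_ifs <;> norm_num

theorem abs_unifDensity_le (x : ℝ) : |unifDensity x| ≤ 1 / 2 := by
  unfold unifDensity; split_ifs <;> norm_num

theorem unifDensity_eq_zero {x : ℝ} (hx : 1 < |x|) : unifDensity x = 0 :=
  if_neg fun h => (abs_le.mpr h).not_gt hx

theorem unifDensity_neg (x : ℝ) : unifDensity (-x) = unifDensity x := by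
  simp only [unifDensity, mem_Icc, neg_le, neg_neg, and_comm]

theorem measurable_unifDensity : Measurable unifDensity :=
  Measurable.ite measurableSet_Icc measurable_const measurable_const

noncomputable def boxAverage (f : ℝ → ℝ) (x : ℝ) : ℝ :=
  (∫ t in (x - 1)..(x + 1), f t) / 2

theorem integral_mul_unifDensity_sub (f : ℝ → ℝ) (x : ℝ) :
    ∫ t, f t * unifDensity (x - t) = boxAverage f x := by
  have hind : (fun t => f t * unifDensity (x - t)) =
      (Icc (x - 1) (x + 1)).indicator (fun t => f t / 2) := by
    ext t
    have hmem : x - t ∈ Icc (-1 : ℝ) 1 ↔ t ∈ Icc (x - 1) (x + 1) := by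
      simp only [mem_Icc]; constructor <;> rintro ⟨h₁, h₂⟩ <;> constructor <;> linarith
    simp only [unifDensity, indicator, hmem]
    split_ifs <;> ring
  rw [hind, integral_indicator measurableSet_Icc, integral_Icc_eq_integral_Ioc,
    ← intervalIntegral.integral_of_le (by linarith), intervalIntegral.integral_div, boxAverage]

section boxAverage

variable {f : ℝ → ℝ}

theorem abs_boxAverage_le {C : ℝ} (hf : ∀ x, |f x| ≤ C) (x : ℝ) :
    |boxAverage f x| ≤ C := by
  have h := intervalIntegral.norm_integral_le_of_norm_le_const (a := x - 1) (b := x + 1)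
    (f := f) fun t _ => hf t
  rw [Real.norm_eq_abs, add_sub_sub_cancel, ← two_mul, mul_one, abs_two] at h
  rw [boxAverage, abs_div, abs_two]
  linarith

theorem boxAverage_eq_zero {R : ℝ} (hf : ∀ x, R < |x| → f x = 0) {x : ℝ}
    (hx : R + 1 < |x|) : boxAverage f x = 0 := by
  rw [boxAverage, intervalIntegral.integral_congr (g := fun _ => 0),
    intervalIntegral.integral_zero, zero_div]
  intro t ht
  rw [uIcc_of_le (by linarith), mem_Icc] at ht
  refine hf t ?_
  have : |x - t| ≤ 1 := abs_le.mpr ⟨by linarith, by linarith⟩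
  linarith [abs_sub_abs_le_abs_sub x t]

theorem continuous_boxAverage (hf : Integrable f) : Continuous (boxAverage f) := by
  have hint : ∀ a b, IntervalIntegrable f volume a b := fun a b => hf.intervalIntegrable
  have hprim := intervalIntegral.continuous_primitive hint 0
  have heq : boxAverage f =
      fun x => ((∫ t in 0..(x + 1), f t) - ∫ t in 0..(x - 1), f t) / 2 := by
    ext x
    rw [boxAverage, intervalIntegral.integral_interval_sub_left (hint _ _) (hint _ _)]
  rw [heq]
  exact ((hprim.comp (continuous_id.add continuous_const)).sub
    (hprim.comp (continuous_id.sub continuous_const))).div_const 2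

theorem boxAverage_neg (hf : ∀ x, f (-x) = f x) (x : ℝ) :
    boxAverage f (-x) = boxAverage f x := by
  have h := intervalIntegral.integral_comp_neg (a := x - 1) (b := x + 1) f
  simp only [hf] at h
  rw [boxAverage, boxAverage, h, neg_add', neg_sub', sub_neg_eq_add]

theorem boxAverage_pow (k : ℕ) (x : ℝ) :
    boxAverage (· ^ k) x = ((x + 1) ^ (k + 1) - (x - 1) ^ (k + 1)) / (2 * (k + 1)) := by
  rw [boxAverage, integral_pow, div_div, mul_comm]

theorem boxAverage_le_of_abs_le (hf : Integrable f) (hmono : ∀ a b, |a| ≤ |b| → f b ≤ f a)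
    {a b : ℝ} (hab : |a| ≤ |b|) : boxAverage f b ≤ boxAverage f a := by
  have hint : ∀ a b, IntervalIntegrable f volume a b := fun a b => hf.intervalIntegrable
  have heven : ∀ x, f (-x) = f x := fun x =>
    le_antisymm (hmono _ _ (abs_neg x).ge) (hmono _ _ (abs_neg x).le)
  have habs : ∀ x, boxAverage f |x| = boxAverage f x := fun x => by
    rcases abs_choice x with h | h <;> rw [h]
    exact boxAverage_neg heven x
  rw [← habs a, ← habs b]
  set x := |a|
  set y := |b|
  have hx : 0 ≤ x := abs_nonneg a
  -- Moving the window from `[x - 1, x + 1]` to `[y - 1, y + 1]` trades the values of `f` on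
  -- `[x - 1, y - 1]` for those two units further from the origin, which are smaller.
  have hshift : ∫ t in (x + 1)..(y + 1), f t ≤ ∫ t in (x - 1)..(y - 1), f t := by
    rw [show x + 1 = x - 1 + 2 by ring, show y + 1 = y - 1 + 2 by ring,
      ← intervalIntegral.integral_comp_add_right]
    refine intervalIntegral.integral_mono_on (by linarith)
      (hf.comp_add_right 2).intervalIntegrable (hint _ _) fun t ht => hmono _ _ ?_
    rw [abs_le]
    constructor <;> linarith [ht.1, le_abs_self (t + 2), abs_nonneg (t + 2)]
  have hsplit := intervalIntegral.integral_interval_sub_interval_comm (hint (x - 1) (x + 1))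
    (hint (y - 1) (y + 1)) (hint (x - 1) (y - 1))
  rw [boxAverage, boxAverage]
  linarith

theorem integral_mul_boxAverage_comm {g : ℝ → ℝ} {C R : ℝ} (hf : Measurable f)
    (hfC : ∀ x, |f x| ≤ C) (hfR : ∀ x, R < |x| → f x = 0) (hg : Continuous g) :
    ∫ x, g x * boxAverage f x = ∫ t, f t * boxAverage g t := by
  obtain ⟨M, hM⟩ := (isCompact_Icc (a := -(R + 1)) (b := R + 1)).exists_bound_of_continuousOn
    hg.continuousOn
  have hint : Integrable (Function.uncurry fun x t => g x * (f t * unifDensity (x - t)))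
      (volume.prod volume) := by
    refine integrable_of_abs_le_of_notMem_eq_zero (C := M * (C * (1 / 2)))
      (measurableSet_Icc.prod measurableSet_Icc) (s := Icc (-(R + 1)) (R + 1) ×ˢ Icc (-R) R)
      ?_ ?_ ?_ ?_
    · rw [Measure.prod_prod]
      exact ENNReal.mul_ne_top measure_Icc_lt_top.ne measure_Icc_lt_top.ne
    · exact ((hg.measurable.comp measurable_fst).mul ((hf.comp measurable_snd).mul
        (measurable_unifDensity.comp (measurable_fst.sub measurable_snd)))).aestronglyMeasurable
    · rintro ⟨x, t⟩ ⟨hx, -⟩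
      have hgx : |g x| ≤ M := hM x hx
      simp only [Function.uncurry_apply_pair, abs_mul]
      exact mul_le_mul hgx (mul_le_mul (hfC t) (abs_unifDensity_le _) (abs_nonneg _)
        ((abs_nonneg _).trans (hfC t))) (by positivity) ((abs_nonneg _).trans hgx)
    · rintro ⟨x, t⟩ hxt
      simp only [Function.uncurry_apply_pair]
      by_cases ht : R < |t|
      · rw [hfR t ht, zero_mul, mul_zero]
      · have ht' : t ∈ Icc (-R) R := abs_le.mp (not_lt.mp ht)
        have hx : R + 1 < |x| := by
          by_contra! hx
          exact hxt ⟨abs_le.mp hx, ht'⟩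
        rw [unifDensity_eq_zero (by linarith [abs_sub_abs_le_abs_sub x t]), mul_zero, mul_zero]
  calc ∫ x, g x * boxAverage f x = ∫ x, ∫ t, g x * (f t * unifDensity (x - t)) := by
        simp_rw [← integral_mul_unifDensity_sub, ← integral_const_mul]
    _ = ∫ t, ∫ x, g x * (f t * unifDensity (x - t)) := integral_integral_swap hint
    _ = ∫ t, f t * boxAverage g t := by
        simp_rw [← integral_mul_unifDensity_sub, ← integral_const_mul]
        congr 1; ext t; congr 1; ext x
        rw [← unifDensity_neg, neg_sub]
        ring

end boxAverage

theorem sumUnifDensity_succ {n : ℕ} (hn : 1 ≤ n) :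
    sumUnifDensity (n + 1) = boxAverage (sumUnifDensity n) := by
  obtain ⟨m, rfl⟩ := Nat.exists_eq_add_of_le' hn
  ext x
  rw [← integral_mul_unifDensity_sub, sumUnifDensity,
    ← integral_sub_left_eq_self _ volume x]
  simp_rw [sub_sub_cancel]

theorem sumUnifDensity_nonneg : ∀ n x, 0 ≤ sumUnifDensity n x
  | 0, _ => le_rfl
  | 1, x => unifDensity_nonneg x
  | n + 2, _ => integral_nonneg fun τ =>
      mul_nonneg (sumUnifDensity_nonneg (n + 1) _) (unifDensity_nonneg τ)

theorem abs_sumUnifDensity_le : ∀ n x, |sumUnifDensity n x| ≤ 1 / 2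
  | 0, _ => by norm_num [sumUnifDensity]
  | 1, x => abs_unifDensity_le x
  | n + 2, x => by
      rw [sumUnifDensity_succ (Nat.le_add_left 1 n)]
      exact abs_boxAverage_le (abs_sumUnifDensity_le (n + 1)) x

theorem sumUnifDensity_eq_zero : ∀ n : ℕ, ∀ x : ℝ, n < |x| → sumUnifDensity n x = 0
  | 0, _, _ => rfl
  | 1, x, hx => unifDensity_eq_zero (by exact_mod_cast hx)
  | n + 2, x, hx => by
      rw [sumUnifDensity_succ (Nat.le_add_left 1 n)]
      exact boxAverage_eq_zero (sumUnifDensity_eq_zero (n + 1))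
        (by push_cast at hx ⊢; linarith)

theorem integrable_of_measurable_sumUnifDensity {n : ℕ} (hm : Measurable (sumUnifDensity n)) :
    Integrable (sumUnifDensity n) :=
  integrable_of_abs_le_of_notMem_eq_zero (s := Icc (-(n : ℝ)) n) measurableSet_Icc
    measure_Icc_lt_top.ne hm.aestronglyMeasurable (fun x _ => abs_sumUnifDensity_le n x)
    fun x hx => sumUnifDensity_eq_zero n x (lt_of_not_ge fun h => hx (abs_le.mp h))

theorem measurable_sumUnifDensity : ∀ n, Measurable (sumUnifDensity n)
  | 0 => measurable_const
  | 1 => measurable_unifDensity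
  | n + 2 => by
      rw [sumUnifDensity_succ (Nat.le_add_left 1 n)]
      exact (continuous_boxAverage (integrable_of_measurable_sumUnifDensity
        (measurable_sumUnifDensity (n + 1)))).measurable

theorem integrable_sumUnifDensity (n : ℕ) : Integrable (sumUnifDensity n) :=
  integrable_of_measurable_sumUnifDensity (measurable_sumUnifDensity n)

theorem sumUnifDensity_le_of_abs_le :
    ∀ n : ℕ, ∀ {a b : ℝ}, |a| ≤ |b| → sumUnifDensity n b ≤ sumUnifDensity n a
  | 0, _, _, _ => le_rfl
  | 1, a, b, hab => by
      by_cases hb : |b| ≤ 1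
      · show unifDensity b ≤ unifDensity a
        rw [unifDensity, unifDensity, if_pos (mem_Icc.mpr (abs_le.mp hb)),
          if_pos (mem_Icc.mpr (abs_le.mp (hab.trans hb)))]
      · exact (unifDensity_eq_zero (not_le.mp hb)).trans_le (unifDensity_nonneg a)
  | n + 2, a, b, hab => by
      rw [sumUnifDensity_succ (Nat.le_add_left 1 n)]
      exact boxAverage_le_of_abs_le (integrable_sumUnifDensity (n + 1))
        (fun _ _ h => sumUnifDensity_le_of_abs_le (n + 1) h) hab

theorem integrable_mul_sumUnifDensity {g : ℝ → ℝ} (hg : Continuous g) (n : ℕ) :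
    Integrable fun x => g x * sumUnifDensity n x := by
  obtain ⟨M, hM⟩ := (isCompact_Icc (a := -(n : ℝ)) (b := n)).exists_bound_of_continuousOn
    hg.continuousOn
  refine integrable_of_abs_le_of_notMem_eq_zero (s := Icc (-(n : ℝ)) n) (C := M * (1 / 2))
    measurableSet_Icc measure_Icc_lt_top.ne
    (hg.measurable.mul (measurable_sumUnifDensity n)).aestronglyMeasurable (fun x hx => ?_)
    fun x hx => ?_
  · rw [abs_mul]
    exact mul_le_mul (hM x hx) (abs_sumUnifDensity_le n x) (abs_nonneg _)
      ((norm_nonneg _).trans (hM x hx))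
  · rw [sumUnifDensity_eq_zero n x (lt_of_not_ge fun h => hx (abs_le.mp h)), mul_zero]

noncomputable def sumUnifMoment (n k : ℕ) : ℝ := ∫ x, x ^ k * sumUnifDensity n x

theorem sumUnifMoment_one (k : ℕ) :
    sumUnifMoment 1 k = (1 - (-1) ^ (k + 1)) / (2 * (k + 1)) := by
  have h := integral_mul_unifDensity_sub (· ^ k) 0
  simp only [zero_sub, unifDensity_neg, boxAverage_pow, zero_add, one_pow] at h
  rw [sumUnifMoment, ← h]
  rfl

theorem sumUnifMoment_succ {n : ℕ} (hn : 1 ≤ n) (k : ℕ) :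
    sumUnifMoment (n + 1) k = ∑ i ∈ Finset.range (k + 2),
      (k + 1).choose i * (1 - (-1) ^ (k + 1 - i)) / (2 * (k + 1)) * sumUnifMoment n i := by
  have hexpand : ∀ t : ℝ, sumUnifDensity n t * boxAverage (· ^ k) t =
      ∑ i ∈ Finset.range (k + 2), (k + 1).choose i * (1 - (-1) ^ (k + 1 - i)) / (2 * (k + 1)) *
        (t ^ i * sumUnifDensity n t) := by
    intro t
    rw [boxAverage_pow, sub_eq_add_neg t, add_pow, add_pow, ← Finset.sum_sub_distrib,
      Finset.sum_div, Finset.mul_sum]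
    refine Finset.sum_congr rfl fun i _ => ?_
    rw [one_pow]
    ring
  rw [sumUnifMoment, sumUnifDensity_succ hn, integral_mul_boxAverage_comm
    (measurable_sumUnifDensity n) (abs_sumUnifDensity_le n) (sumUnifDensity_eq_zero n)
    (continuous_pow k), integral_congr_ae (Filter.Eventually.of_forall hexpand),
    integral_finsetSum _ fun i _ =>
      (integrable_mul_sumUnifDensity (continuous_pow i) n).const_mul _]
  simp_rw [integral_const_mul, sumUnifMoment]

section closedForms

variable {n : ℕ}

theorem sumUnifMoment_zero (hn : 1 ≤ n) : sumUnifMoment n 0 = 1 := by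
  induction n, hn using Nat.le_induction with
  | base => norm_num [sumUnifMoment_one]
  | succ n hn ih => norm_num [sumUnifMoment_succ hn, Finset.sum_range_succ, ih]

theorem sumUnifMoment_two (hn : 1 ≤ n) : sumUnifMoment n 2 = n / 3 := by
  induction n, hn using Nat.le_induction with
  | base => norm_num [sumUnifMoment_one]
  | succ n hn ih =>
    norm_num [sumUnifMoment_succ hn, Finset.sum_range_succ, ih, sumUnifMoment_zero hn]
    ring

theorem sumUnifMoment_four (hn : 1 ≤ n) : sumUnifMoment n 4 = n ^ 2 / 3 - 2 * n / 15 := by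
  induction n, hn using Nat.le_induction with
  | base => norm_num [sumUnifMoment_one]
  | succ n hn ih =>
    norm_num [sumUnifMoment_succ hn, Finset.sum_range_succ, ih, sumUnifMoment_zero hn,
      sumUnifMoment_two hn, Nat.choose]
    ring

theorem sumUnifMoment_six (hn : 1 ≤ n) :
    sumUnifMoment n 6 = 5 * n ^ 3 / 9 - 2 * n ^ 2 / 3 + 16 * n / 63 := by
  induction n, hn using Nat.le_induction with
  | base => norm_num [sumUnifMoment_one]
  | succ n hn ih =>
    norm_num [sumUnifMoment_succ hn, Finset.sum_range_succ, ih, sumUnifMoment_zero hn,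
      sumUnifMoment_two hn, sumUnifMoment_four hn, Nat.choose]
    ring

theorem sumUnifMoment_eight (hn : 1 ≤ n) : sumUnifMoment n 8 =
    35 * n ^ 4 / 27 - 28 * n ^ 3 / 9 + 404 * n ^ 2 / 135 - 16 * n / 15 := by
  induction n, hn using Nat.le_induction with
  | base => norm_num [sumUnifMoment_one]
  | succ n hn ih =>
    norm_num [sumUnifMoment_succ hn, Finset.sum_range_succ, ih, sumUnifMoment_zero hn,
      sumUnifMoment_two hn, sumUnifMoment_four hn, sumUnifMoment_six hn, Nat.choose]
    ring

end closedForms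

theorem integral_sumUnifDensity {n : ℕ} (hn : 1 ≤ n) : ∫ x, sumUnifDensity n x = 1 := by
  simpa [sumUnifMoment] using sumUnifMoment_zero hn

noncomputable def testFun (ν s : ℝ) : ℝ :=
  (s ^ 2 - ν / 2) ^ 2 * s ^ 2 * (1 - s ^ 2 / (64 * ν))

theorem integral_testFun_mul_sumUnifDensity {n : ℕ} (hn : 1 ≤ n) :
    ∫ s, testFun n s * sumUnifDensity n s =
      2023 / 6912 * n ^ 3 - 2849 / 5760 * n ^ 2 + 3193 / 15120 * n + 1 / 60 := by
  have hn0 : (n : ℝ) ≠ 0 := by positivity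
  have hexpand : ∀ s, testFun n s * sumUnifDensity n s =
      n ^ 2 / 4 * (s ^ 2 * sumUnifDensity n s) - (n + n / 256) * (s ^ 4 * sumUnifDensity n s) +
        65 / 64 * (s ^ 6 * sumUnifDensity n s) - 1 / (64 * n) * (s ^ 8 * sumUnifDensity n s) := by
    intro s
    rw [testFun]
    field_simp
    ring
  have hint := fun k => integrable_mul_sumUnifDensity (continuous_pow k) n
  rw [integral_congr_ae (Filter.Eventually.of_forall hexpand), integral_sub, integral_add,
    integral_sub]
  · simp only [integral_const_mul]
    rw [← sumUnifMoment, ← sumUnifMoment, ← sumUnifMoment, ← sumUnifMoment,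
      sumUnifMoment_two hn, sumUnifMoment_four hn, sumUnifMoment_six hn, sumUnifMoment_eight hn]
    field_simp
    ring
  exacts [(hint 2).const_mul _, (hint 4).const_mul _, ((hint 2).const_mul _).sub
    ((hint 4).const_mul _), (hint 6).const_mul _, (((hint 2).const_mul _).sub
    ((hint 4).const_mul _)).add ((hint 6).const_mul _), (hint 8).const_mul _]

def shell (ν : ℝ) : Set ℝ := {s | s ^ 2 ∈ Ioc ν (64 * ν)}

theorem measurableSet_shell (ν : ℝ) : MeasurableSet (shell ν) :=
  measurableSet_Ioc.preimage (measurable_id.pow_const 2)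

theorem testFun_le {ν : ℝ} (hν : 0 < ν) (s : ℝ) :
    testFun ν s ≤ ν ^ 3 / 4 + 2 ^ 18 * ν ^ 3 * (shell ν).indicator 1 s := by
  have ht : 0 ≤ s ^ 2 := sq_nonneg s
  have hsq : 0 ≤ (s ^ 2 - ν / 2) ^ 2 * s ^ 2 := by positivity
  have hcut : testFun ν s ≤ (s ^ 2 - ν / 2) ^ 2 * s ^ 2 :=
    mul_le_of_le_one_right hsq (sub_le_self _ (by positivity))
  by_cases hD : s ^ 2 ∈ Ioc ν (64 * ν)
  · rw [indicator_of_mem (show s ∈ shell ν from hD), Pi.one_apply, mul_one]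
    have hleft : (s ^ 2 - ν / 2) ^ 2 * s ^ 2 ≤ (s ^ 2) ^ 2 * s ^ 2 := by
      gcongr
      exacts [by linarith [hD.1], by linarith]
    have hcube : (s ^ 2) ^ 3 ≤ (64 * ν) ^ 3 := pow_le_pow_left₀ ht hD.2 3
    nlinarith
  · rw [indicator_of_notMem (show s ∉ shell ν from hD), mul_zero, add_zero]
    rcases le_or_gt (s ^ 2) ν with hle | hgt
    · have hleft : (s ^ 2 - ν / 2) ^ 2 ≤ (ν / 2) ^ 2 := sq_le_sq' (by linarith) (by linarith)
      calc testFun ν s ≤ (s ^ 2 - ν / 2) ^ 2 * s ^ 2 := hcut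
        _ ≤ (ν / 2) ^ 2 * ν := mul_le_mul hleft hle ht (by positivity)
        _ = ν ^ 3 / 4 := by ring
    · have hneg : 1 - s ^ 2 / (64 * ν) ≤ 0 := by
        rw [sub_nonpos, le_div_iff₀ (by positivity), one_mul]
        exact (lt_of_not_ge fun h => hD ⟨hgt, h⟩).le
      exact (mul_nonpos_of_nonneg_of_nonpos hsq hneg).trans (by positivity)

theorem integral_testFun_mul_sumUnifDensity_le {ν : ℝ} (hν : 0 < ν) {n : ℕ} (hn : 1 ≤ n) :
    ∫ s, testFun ν s * sumUnifDensity n s ≤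
      ν ^ 3 / 4 + 2 ^ 18 * ν ^ 3 * ∫ s in shell ν, sumUnifDensity n s := by
  have hF := integrable_sumUnifDensity n
  have hFD := (hF.indicator (measurableSet_shell ν)).const_mul (2 ^ 18 * ν ^ 3)
  calc ∫ s, testFun ν s * sumUnifDensity n s
      ≤ ∫ s, (ν ^ 3 / 4 * sumUnifDensity n s +
          2 ^ 18 * ν ^ 3 * (shell ν).indicator (sumUnifDensity n) s) := by
        refine integral_mono (integrable_mul_sumUnifDensity (by unfold testFun; fun_prop) n)
          ((hF.const_mul _).add hFD) fun s => ?_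
        have h := mul_le_mul_of_nonneg_right (testFun_le hν s) (sumUnifDensity_nonneg n s)
        by_cases hs : s ∈ shell ν
        · simp only [indicator_of_mem hs, Pi.one_apply] at h ⊢
          linarith
        · simp only [indicator_of_notMem hs] at h ⊢
          linarith
    _ = ν ^ 3 / 4 + 2 ^ 18 * ν ^ 3 * ∫ s in shell ν, sumUnifDensity n s := by
        rw [integral_add (hF.const_mul _) hFD, integral_const_mul, integral_const_mul,
          integral_indicator (measurableSet_shell ν), integral_sumUnifDensity hn, mul_one]

theorem setIntegral_shell_sumUnifDensity_le (ν : ℝ) (n : ℕ) :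
    ∫ s in shell ν, sumUnifDensity n s ≤ sumUnifDensity n √ν * (16 * √ν) := by
  have hsub : shell ν ⊆ Icc (-(8 * √ν)) (8 * √ν) := fun s hs => by
    have h := Real.abs_le_sqrt hs.2
    rwa [Real.sqrt_mul (by norm_num), show (64 : ℝ) = 8 ^ 2 by norm_num,
      Real.sqrt_sq (by norm_num), abs_le] at h
  have hbound : ∀ s ∈ shell ν, ‖sumUnifDensity n s‖ ≤ sumUnifDensity n √ν := fun s hs => by
    rw [Real.norm_eq_abs, abs_of_nonneg (sumUnifDensity_nonneg n s)]
    refine sumUnifDensity_le_of_abs_le n ?_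
    rw [abs_of_nonneg (Real.sqrt_nonneg ν), ← Real.sqrt_sq_eq_abs]
    exact Real.sqrt_le_sqrt hs.1.le
  have hvol : volume.real (shell ν) ≤ 16 * √ν := by
    calc volume.real (shell ν) ≤ volume.real (Icc (-(8 * √ν)) (8 * √ν)) :=
          measureReal_mono hsub measure_Icc_lt_top.ne
      _ = 16 * √ν := by
          rw [Real.volume_real_Icc_of_le (by linarith [Real.sqrt_nonneg ν])]; ring
  calc ∫ s in shell ν, sumUnifDensity n s
      ≤ ‖∫ s in shell ν, sumUnifDensity n s‖ := Real.le_norm_self _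
    _ ≤ sumUnifDensity n √ν * volume.real (shell ν) := norm_setIntegral_le_of_norm_le_const
        ((measure_mono hsub).trans_lt measure_Icc_lt_top) hbound
    _ ≤ sumUnifDensity n √ν * (16 * √ν) :=
        mul_le_mul_of_nonneg_left hvol (sumUnifDensity_nonneg n _)

theorem one_div_le_sumUnifDensity_sqrt {n : ℕ} (hn : 64 ≤ n) :
    1 / (2 ^ 27 * √n) ≤ sumUnifDensity n √n := by
  have hn1 : 1 ≤ n := by omega
  have hν : (64 : ℝ) ≤ n := by exact_mod_cast hn
  have hmean : 9 * (n : ℝ) ^ 3 / 32 ≤ ∫ s, testFun n s * sumUnifDensity n s := by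
    rw [integral_testFun_mul_sumUnifDensity hn1]
    nlinarith
  have hsplit := integral_testFun_mul_sumUnifDensity_le (by positivity) hn1
  have hshell := setIntegral_shell_sumUnifDensity_le n n
  have hkey : 1 ≤ 2 ^ 27 * √n * sumUnifDensity n √n := by
    refine le_of_mul_le_mul_left ?_ (by positivity : (0 : ℝ) < n ^ 3)
    nlinarith [mul_le_mul_of_nonneg_left hshell (by positivity : (0 : ℝ) ≤ 2 ^ 18 * n ^ 3)]
  rw [div_le_iff₀ (by positivity)]
  linarith

theorem one_div_four_pow_le_sumUnifDensity {n : ℕ} (hn : 1 ≤ n) :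
    (1 / 4 : ℝ) ^ n ≤ sumUnifDensity n ((n + 1) / 2) := by
  induction n, hn using Nat.le_induction with
  | base => norm_num [sumUnifDensity, unifDensity]
  | succ n hn ih =>
    have hn' : (1 : ℝ) ≤ n := by exact_mod_cast hn
    have hint := (integrable_sumUnifDensity n).intervalIntegrable (a := n / 2) (b := n / 2 + 2)
    have hhalf :
        1 / 2 * (1 / 4 : ℝ) ^ n ≤ ∫ t in (n / 2 : ℝ)..(n + 1) / 2, sumUnifDensity n t := by
      calc 1 / 2 * (1 / 4 : ℝ) ^ n = ∫ _ in (n / 2 : ℝ)..(n + 1) / 2, (1 / 4 : ℝ) ^ n := by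
            rw [intervalIntegral.integral_const, smul_eq_mul]; ring
        _ ≤ ∫ t in (n / 2 : ℝ)..(n + 1) / 2, sumUnifDensity n t := by
            refine intervalIntegral.integral_mono_on (by linarith) intervalIntegrable_const
              ((integrable_sumUnifDensity n).intervalIntegrable) fun t ht => ?_
            refine ih.trans (sumUnifDensity_le_of_abs_le n ?_)
            rw [abs_of_nonneg (by linarith [ht.1]), abs_of_nonneg (by positivity)]
            exact ht.2
    have hwindow : ∫ t in (n / 2 : ℝ)..(n + 1) / 2, sumUnifDensity n t ≤
        ∫ t in (n / 2 : ℝ)..n / 2 + 2, sumUnifDensity n t :=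
      intervalIntegral.integral_mono_interval le_rfl (by linarith) (by linarith)
        (Filter.Eventually.of_forall (sumUnifDensity_nonneg n)) hint
    rw [sumUnifDensity_succ hn, boxAverage]
    push_cast
    rw [show ((n : ℝ) + 1 + 1) / 2 - 1 = n / 2 by ring,
      show ((n : ℝ) + 1 + 1) / 2 + 1 = n / 2 + 2 by ring, pow_succ]
    linarith

theorem sumUnifDensity_lower :
    ∃ cl : ℝ, 0 < cl ∧ ∀ n : ℕ, 1 ≤ n →
      ∀ x ∈ Set.Icc (-(Real.sqrt n)) (Real.sqrt n),
        cl / Real.sqrt n ≤ sumUnifDensity n x := by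
  refine ⟨(1 / 4) ^ 64, by positivity, fun n hn x hx => ?_⟩
  have hx' : |x| ≤ √n := abs_le.mpr hx
  have hsqrt : 1 ≤ √(n : ℝ) := Real.one_le_sqrt.mpr (by exact_mod_cast hn)
  rcases le_or_gt 64 n with hbig | hsmall
  · calc (1 / 4 : ℝ) ^ 64 / √n ≤ 1 / 2 ^ 27 / √n := by gcongr; norm_num
      _ = 1 / (2 ^ 27 * √n) := div_div _ _ _
      _ ≤ sumUnifDensity n √n := one_div_le_sumUnifDensity_sqrt hbig
      _ ≤ sumUnifDensity n x := by
          refine sumUnifDensity_le_of_abs_le n ?_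
          rwa [abs_of_nonneg (Real.sqrt_nonneg _)]
  · have hamgm : √(n : ℝ) ≤ (n + 1) / 2 := by
      nlinarith [Real.sq_sqrt (Nat.cast_nonneg (α := ℝ) n), sq_nonneg (√(n : ℝ) - 1)]
    calc (1 / 4 : ℝ) ^ 64 / √n ≤ (1 / 4) ^ 64 := div_le_self (by positivity) hsqrt
      _ ≤ (1 / 4) ^ n := pow_le_pow_of_le_one (by norm_num) (by norm_num) hsmall.le
      _ ≤ sumUnifDensity n ((n + 1) / 2) := one_div_four_pow_le_sumUnifDensity hn
      _ ≤ sumUnifDensity n x := by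
          refine sumUnifDensity_le_of_abs_le n ?_
          rw [abs_of_nonneg (a := ((n : ℝ) + 1) / 2) (by positivity)]
          exact hx'.trans hamgm
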